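/- arXiv:1210.0667 — 3 statements merged into one kernel-verified Lean document; each statement's English description precedes it below -/
import Mathlib

section
/- Suppose A, B ∈ 𝓑(L²(M; dμ)) are positivity preserving. Then 0 ≼ B ≼ A (i.e., A − B is positivity preserving) if and only if |B f| ≤ A |f| μ-a.e. for all f ∈ L²(M; dμ). -/
/-!
A positivity preserving additive map `B` is monotone, so `-|f| ≤ f ≤ |f|` gives
`|B f| ≤ B |f|`, and `B ≼ A` then yields `|B f| ≤ A |f|`. Conversely, for `f ≥ 0`,
`B f ≤ |B f| ≤ A |f| = A f`.
-/

open MeasureTheory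

section LatticeOrderedGroup

variable {F α β : Type*} [AddCommGroup α] [Lattice α] [IsOrderedAddMonoid α]
  [AddCommGroup β] [Lattice β] [IsOrderedAddMonoid β] [FunLike F α β] [AddMonoidHomClass F α β]

theorem abs_map_le_map_abs (B : F) (hB : ∀ a, 0 ≤ a → 0 ≤ B a) (a : α) : |B a| ≤ B |a| := by
  have hmono : Monotone B := (monotone_iff_map_nonneg B).2 hB
  refine abs_le'.2 ⟨hmono (le_abs_self a), ?_⟩
  rw [← map_neg]
  exact hmono (neg_le_abs a)

theorem forall_nonneg_map_le_iff_abs_map_le (A B : F) (hB : ∀ a, 0 ≤ a → 0 ≤ B a) :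
    (∀ a, 0 ≤ a → B a ≤ A a) ↔ ∀ a, |B a| ≤ A |a| := by
  constructor
  · intro hBA a
    exact (abs_map_le_map_abs B hB a).trans (hBA |a| (abs_nonneg a))
  · intro hBA a ha
    simpa only [abs_of_nonneg ha] using (le_abs_self (B a)).trans (hBA a)

end LatticeOrderedGroup

theorem stmt_5_general {α : Type*} [MeasurableSpace α] {μ : Measure α}
    (A B : Lp ℝ 2 μ →L[ℝ] Lp ℝ 2 μ)
    (hB : ∀ f : Lp ℝ 2 μ, 0 ≤ f → 0 ≤ B f) :
    (∀ f : Lp ℝ 2 μ, 0 ≤ f → 0 ≤ (A - B) f) ↔ (∀ f : Lp ℝ 2 μ, |B f| ≤ A |f|) := by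
  simp only [sub_apply, sub_nonneg]
  exact forall_nonneg_map_le_iff_abs_map_le A B hB

/-- If `A, B` are bounded positivity preserving operators on `L²(M; dμ)`, then
`0 ≼ B ≼ A` (i.e. `A − B` is positivity preserving) iff `|B f| ≤ A |f|` μ-a.e.
for all `f ∈ L²(M; dμ)`. -/
theorem stmt_5 {α : Type*} [MeasurableSpace α] {μ : Measure α} [SigmaFinite μ]
    (A B : Lp ℝ 2 μ →L[ℝ] Lp ℝ 2 μ)
    (hA : ∀ f : Lp ℝ 2 μ, 0 ≤ f → 0 ≤ A f)
    (hB : ∀ f : Lp ℝ 2 μ, 0 ≤ f → 0 ≤ B f) :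
    (∀ f : Lp ℝ 2 μ, 0 ≤ f → 0 ≤ (A - B) f) ↔ (∀ f : Lp ℝ 2 μ, |B f| ≤ A |f|) :=
  stmt_5_general A B hB
end

section
/- Let A, B ∈ 𝓑(L²(M; dμ)) with 0 ≼ B ≼ A (in the positivity preserving ordering), and suppose A ∈ 𝓑_{2n}(L²(M; dμ)) for some n ∈ ℕ. Then B ∈ 𝓑_{2n}(L²(M; dμ)) and ‖B‖_{𝓑_{2n}} ≤ ‖A‖_{𝓑_{2n}}. -/
/-!
Since `B` and `A - B` preserve positivity, their matrices in an orthonormal family `χ` of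
nonnegative functions satisfy `0 ≤ ⟪χⱼ, B χₖ⟫ ≤ ⟪χⱼ, A χₖ⟫`; normalized indicators of the fibres
of a simple function are such families, and their spans approximate any finitely many `L²`
functions. Let `T` be the compression of `B` to such a span `K`. Expanding `‖T x‖²` in an eigenbasis
`v` of `T†T` and applying Jensen's inequality with the doubly substochastic weights `⟪v_k, xᵢ⟫²`
gives `∑ᵢ |⟪T xᵢ, yᵢ⟫|^{2n} ≤ tr ((T†T)ⁿ)` for the projections `xᵢ`, `yᵢ` of orthonormal families.
This trace is entrywise monotone in the matrix of `T`, and for the compression of `A` it is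
attained by its singular vectors, so it is at most the Schatten sum of `A`. Letting the
approximation improve gives the bound for `B` itself.
-/

open MeasureTheory ENNReal

/-- The Schatten `p`-norm of a bounded operator on a Hilbert space, defined via the
well-known characterization (valid for `p ≥ 1`)
`‖T‖_p^p = sup { ∑ᵢ |⟨T eᵢ, fᵢ⟩|^p : (eᵢ), (fᵢ) finite orthonormal families }`. -/
noncomputable def schattenNorm (𝕜 : Type*) [RCLike 𝕜] {H : Type*} [NormedAddCommGroup H]
    [InnerProductSpace 𝕜 H] (p : ℝ) (T : H →L[𝕜] H) : ℝ≥0∞ :=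
  (⨆ (n : ℕ) (e : Fin n → H) (f : Fin n → H) (_ : Orthonormal 𝕜 e) (_ : Orthonormal 𝕜 f),
    ∑ i : Fin n, (‖(inner 𝕜 (T (e i)) (f i) : 𝕜)‖₊ : ℝ≥0∞) ^ p) ^ (1 / p)

open Finset Submodule
open scoped InnerProductSpace Matrix
open LinearMap (adjoint trace)

theorem pow_sum_mul_le_sum_mul_pow {ι : Type*} [Fintype ι] {w z : ι → ℝ} (hw : ∀ i, 0 ≤ w i)
    (hw1 : ∑ i, w i ≤ 1) (hz : ∀ i, 0 ≤ z i) {n : ℕ} (hn : n ≠ 0) :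
    (∑ i, w i * z i) ^ n ≤ ∑ i, w i * z i ^ n := by
  -- put the missing mass `1 - ∑ w` on an extra point where `z = 0`
  have key := Real.pow_arith_mean_le_arith_mean_pow univ
    (Option.elim · (1 - ∑ i, w i) w) (Option.elim · 0 z)
    (by rintro (_ | i) -; exacts [sub_nonneg.2 hw1, hw i])
    (by simp [Fintype.sum_option])
    (by rintro (_ | i) -; exacts [le_rfl, hz i]) n
  simpa [Fintype.sum_option, hn] using key

namespace Matrix

variable {m : Type*} [Fintype m] [DecidableEq m] {M N : Matrix m m ℝ}

theorem pow_apply_le_pow_apply (h0 : ∀ i j, 0 ≤ M i j) (hle : ∀ i j, M i j ≤ N i j) (n : ℕ)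
    (i j : m) : (M ^ n) i j ≤ (N ^ n) i j := by
  induction n generalizing j with
  | zero => rfl
  | succ n ih =>
    rw [pow_succ, pow_succ, mul_apply, mul_apply]
    exact sum_le_sum fun l _ => mul_le_mul (ih l) (hle l j) (h0 l j)
      ((pow_apply_nonneg h0 n i l).trans (ih l))

theorem trace_pow_transpose_mul_self_le (h0 : ∀ i j, 0 ≤ M i j) (hle : ∀ i j, M i j ≤ N i j)
    (n : ℕ) : ((Mᵀ * M) ^ n).trace ≤ ((Nᵀ * N) ^ n).trace := by
  have hMM : ∀ i j, 0 ≤ (Mᵀ * M) i j := fun i j =>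
    sum_nonneg fun l _ => mul_nonneg (h0 l i) (h0 l j)
  have hMN : ∀ i j, (Mᵀ * M) i j ≤ (Nᵀ * N) i j := fun i j =>
    sum_le_sum fun l _ => mul_le_mul (hle l i) (hle l j) (h0 l j) ((h0 l i).trans (hle l i))
  exact sum_le_sum fun i _ => pow_apply_le_pow_apply hMM hMN n i i

end Matrix

section InnerProductSpace

variable {E : Type*} [NormedAddCommGroup E] [InnerProductSpace ℝ E]

theorem norm_le_one_of_sum_inner_sq_le {ι : Type*} [Fintype ι] {x : ι → E}
    (hx : ∀ w, ∑ i, ⟪x i, w⟫_ℝ ^ 2 ≤ ‖w‖ ^ 2) (i : ι) : ‖x i‖ ≤ 1 := by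
  have h : ⟪x i, x i⟫_ℝ ^ 2 ≤ ‖x i‖ ^ 2 :=
    (single_le_sum (f := fun j => ⟪x j, x i⟫_ℝ ^ 2) (fun _ _ => sq_nonneg _)
      (mem_univ i)).trans (hx (x i))
  rw [real_inner_self_eq_norm_sq] at h
  by_contra! hi
  nlinarith [one_lt_pow₀ hi two_ne_zero]

theorem le_of_forall_dist_lt_le {X : Type*} [PseudoMetricSpace X] {F : X → ℝ} (hF : Continuous F)
    {x : X} {C : ℝ} (h : ∀ ε > 0, ∃ y, dist x y < ε ∧ F y ≤ C) : F x ≤ C :=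
  (isClosed_le hF continuous_const).closure_subset
    (Metric.mem_closure_iff.2 fun ε hε => (h ε hε).imp fun _ hy => ⟨hy.2, hy.1⟩)

theorem Orthonormal.exists_orthonormalBasis_span {ι : Type*} [Fintype ι] {χ : ι → E}
    (hχ : Orthonormal ℝ χ) :
    ∃ (m : ℕ) (b : OrthonormalBasis (Fin m) ℝ (span ℝ (Set.range χ))),
      ∀ k, ∃ j, (b k : E) = χ j := by
  let b := (Module.Basis.span hχ.linearIndependent).toOrthonormalBasis
    ((span ℝ (Set.range χ)).subtypeₗᵢ.orthonormal_comp_iff.1 (by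
      simpa [Function.comp_def, Module.Basis.span_apply] using hχ))
  exact ⟨_, b.reindex (Fintype.equivFin ι),
    fun k => ⟨(Fintype.equivFin ι).symm k, by simp [b, Module.Basis.span_apply]⟩⟩

namespace LinearMap.IsSymmetric

variable [FiniteDimensional ℝ E] {P : E →ₗ[ℝ] E} (hP : P.IsSymmetric)
include hP

theorem inner_apply_self_eq_sum_eigenvalues (x : E) :
    ⟪x, P x⟫_ℝ = ∑ k, hP.eigenvalues rfl k * ⟪hP.eigenvectorBasis rfl k, x⟫_ℝ ^ 2 := by
  rw [← (hP.eigenvectorBasis rfl).sum_inner_mul_inner]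
  refine sum_congr rfl fun k _ => ?_
  rw [← hP, hP.apply_eigenvectorBasis, real_inner_smul_left, real_inner_comm x]
  simp only [RCLike.ofReal_real_eq_id, id_eq]
  ring

theorem trace_pow_eq_sum_eigenvalues (n : ℕ) :
    trace ℝ E (P ^ n) = ∑ k, hP.eigenvalues rfl k ^ n := by
  rw [trace_eq_sum_inner _ (hP.eigenvectorBasis rfl)]
  refine sum_congr rfl fun k _ => ?_
  rw [(hP.hasEigenvector_eigenvectorBasis rfl k).pow_apply n, real_inner_smul_right,
    (hP.eigenvectorBasis rfl).inner_eq_one, mul_one]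
  simp

end LinearMap.IsSymmetric

namespace LinearMap

variable [FiniteDimensional ℝ E]

theorem sum_abs_inner_pow_le_trace {ι : Type*} [Fintype ι] (T : E →ₗ[ℝ] E) {n : ℕ} (hn : n ≠ 0)
    {x y : ι → E} (hx : ∀ w, ∑ i, ⟪x i, w⟫_ℝ ^ 2 ≤ ‖w‖ ^ 2) (hy : ∀ i, ‖y i‖ ≤ 1) :
    ∑ i, |⟪T (x i), y i⟫_ℝ| ^ (2 * n) ≤ trace ℝ E ((adjoint T ∘ₗ T) ^ n) := by
  have hP := T.isPositive_adjoint_comp_self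
  set v := hP.isSymmetric.eigenvectorBasis rfl
  set d := hP.isSymmetric.eigenvalues rfl
  set w : ι → _ → ℝ := fun i k => ⟪v k, x i⟫_ℝ ^ 2
  have hd : ∀ k, 0 ≤ d k := hP.nonneg_eigenvalues rfl
  have hrow : ∀ i, ∑ k, w i k ≤ 1 := fun i => by
    simpa [w, v.sum_sq_inner_right] using
      pow_le_one₀ (norm_nonneg _) (norm_le_one_of_sum_inner_sq_le hx i) (n := 2)
  have hcol : ∀ k, ∑ i, w i k ≤ 1 := fun k => by
    simpa [w, real_inner_comm] using hx (v k)
  have hnorm : ∀ i, ‖T (x i)‖ ^ 2 = ∑ k, w i k * d k := fun i => by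
    rw [← real_inner_self_eq_norm_sq, ← adjoint_inner_right, ← comp_apply,
      hP.isSymmetric.inner_apply_self_eq_sum_eigenvalues]
    exact sum_congr rfl fun k _ => mul_comm _ _
  calc ∑ i, |⟪T (x i), y i⟫_ℝ| ^ (2 * n)
      ≤ ∑ i, (‖T (x i)‖ ^ 2) ^ n := by
        refine sum_le_sum fun i _ => ?_
        rw [← pow_mul]
        gcongr
        exact (abs_real_inner_le_norm _ _).trans (mul_le_of_le_one_right (norm_nonneg _) (hy i))
    _ ≤ ∑ i, ∑ k, w i k * d k ^ n := by
        refine sum_le_sum fun i _ => ?_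
        rw [hnorm]
        exact pow_sum_mul_le_sum_mul_pow (fun k => sq_nonneg _) (hrow i) hd hn
    _ = ∑ k, (∑ i, w i k) * d k ^ n := by
        rw [sum_comm]
        simp_rw [sum_mul]
    _ ≤ ∑ k, d k ^ n := by
        gcongr with k
        exact mul_le_of_le_one_left (pow_nonneg (hd k) n) (hcol k)
    _ = _ := (hP.isSymmetric.trace_pow_eq_sum_eigenvalues n).symm

theorem trace_le_of_forall_orthonormal (T : E →ₗ[ℝ] E) {n : ℕ} (hn : n ≠ 0) {C : ℝ}
    (hC : ∀ (N : ℕ) (ξ η : Fin N → E), Orthonormal ℝ ξ → Orthonormal ℝ η →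
      ∑ i, |⟪T (ξ i), η i⟫_ℝ| ^ (2 * n) ≤ C) :
    trace ℝ E ((adjoint T ∘ₗ T) ^ n) ≤ C := by
  have hP := T.isPositive_adjoint_comp_self
  set v := hP.isSymmetric.eigenvectorBasis rfl
  set d := hP.isSymmetric.eigenvalues rfl
  have hd : ∀ k, 0 ≤ d k := hP.nonneg_eigenvalues rfl
  have hTv : ∀ k l, ⟪T (v k), T (v l)⟫_ℝ = if k = l then d k else 0 := fun k l => by
    rw [← adjoint_inner_right, ← comp_apply, hP.isSymmetric.apply_eigenvectorBasis,
      real_inner_smul_right, orthonormal_iff_ite.1 v.orthonormal]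
    split_ifs with h <;> simp [h, d]
  -- `v k` and `η k` are right and left singular vectors for the singular value `√(d k)`
  let ι := {k // d k ≠ 0}
  let η : ι → E := fun k => (√(d k))⁻¹ • T (v k)
  have hη : Orthonormal ℝ η := by
    rw [orthonormal_iff_ite]
    intro k l
    simp only [η, real_inner_smul_left, real_inner_smul_right, hTv, ← Subtype.ext_iff]
    split_ifs with h
    · rw [h, ← mul_assoc, ← mul_inv, Real.mul_self_sqrt (hd l), inv_mul_cancel₀ l.2]
    · simp
  have hval : ∀ k : ι, |⟪T (v k), η k⟫_ℝ| ^ (2 * n) = d k ^ n := fun k => by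
    rw [real_inner_smul_right, hTv, if_pos rfl, pow_mul, sq_abs, mul_pow, inv_pow,
      Real.sq_sqrt (hd k), sq, ← mul_assoc, inv_mul_cancel₀ k.2, one_mul]
  let e := Fintype.equivFin ι
  calc trace ℝ E ((adjoint T ∘ₗ T) ^ n) = ∑ k, d k ^ n :=
        hP.isSymmetric.trace_pow_eq_sum_eigenvalues n
    _ = ∑ k : ι, d k ^ n := by
        rw [← sum_filter_of_ne (p := fun k => d k ≠ 0) fun k _ h => by contrapose! h; simp [h, hn]]
        exact sum_subtype _ (by simp) _
    _ = ∑ i, |⟪T (v (e.symm i)), η (e.symm i)⟫_ℝ| ^ (2 * n) := by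
        rw [e.symm.sum_comp (fun k => |⟪T (v k), η k⟫_ℝ| ^ (2 * n))]
        exact sum_congr rfl fun k _ => (hval k).symm
    _ ≤ C := hC _ _ _ ((v.orthonormal.comp _ Subtype.val_injective).comp _ e.symm.injective)
        (hη.comp _ e.symm.injective)

theorem trace_adjoint_comp_self_pow_eq_matrix_trace {ι : Type*} [Fintype ι] [DecidableEq ι]
    (b : OrthonormalBasis ι ℝ E) (T : E →ₗ[ℝ] E) (n : ℕ) :
    trace ℝ E ((adjoint T ∘ₗ T) ^ n) =
      (((toMatrixOrthonormal b T)ᵀ * toMatrixOrthonormal b T) ^ n).trace := by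
  rw [trace_eq_matrix_trace ℝ b.toBasis, ← Matrix.conjTranspose_eq_transpose_of_trivial,
    ← Matrix.star_eq_conjTranspose, ← map_star, ← map_mul, ← map_pow, star_eq_adjoint]
  rfl

theorem trace_adjoint_comp_self_pow_le {ι : Type*} [Fintype ι] [DecidableEq ι]
    (b : OrthonormalBasis ι ℝ E) {S T : E →ₗ[ℝ] E} (h0 : ∀ j k, 0 ≤ ⟪b j, S (b k)⟫_ℝ)
    (hle : ∀ j k, ⟪b j, S (b k)⟫_ℝ ≤ ⟪b j, T (b k)⟫_ℝ) (n : ℕ) :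
    trace ℝ E ((adjoint S ∘ₗ S) ^ n) ≤ trace ℝ E ((adjoint T ∘ₗ T) ^ n) := by
  simp only [trace_adjoint_comp_self_pow_eq_matrix_trace b]
  exact Matrix.trace_pow_transpose_mul_self_le (by simpa [toMatrixOrthonormal_apply_apply])
    (by simpa [toMatrixOrthonormal_apply_apply]) n

end LinearMap

namespace Submodule

section

variable (K : Submodule ℝ E) [K.HasOrthogonalProjection]

noncomputable def compression (T : E →L[ℝ] E) : K →ₗ[ℝ] K :=
  (K.orthogonalProjectionOnto ∘L T ∘L K.subtypeL : K →L[ℝ] K)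

theorem inner_compression_apply (T : E →L[ℝ] E) (x y : K) :
    ⟪K.compression T x, y⟫_ℝ = ⟪T x, y⟫_ℝ :=
  inner_orthogonalProjectionOnto_eq_of_mem_right y (T x)

variable {K}

theorem sum_inner_orthogonalProjectionOnto_sq_le {κ : Type*} [Fintype κ] {e : κ → E}
    (he : Orthonormal ℝ e) (w : K) :
    ∑ i, ⟪K.orthogonalProjectionOnto (e i), w⟫_ℝ ^ 2 ≤ ‖w‖ ^ 2 := by
  simpa [real_inner_comm] using he.sum_inner_products_le (w : E) (s := univ)

theorem norm_sub_starProjection_lt {x g : E} (hg : g ∈ K) {ε : ℝ} (h : ‖x - g‖ < ε) :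
    ‖x - K.starProjection x‖ < ε := by
  rw [starProjection_minimal]
  exact (ciInf_le ⟨0, Set.forall_mem_range.2 fun _ => norm_nonneg _⟩ ⟨g, hg⟩).trans_lt h

end

section

variable {K : Submodule ℝ E} [FiniteDimensional ℝ K]

theorem sum_abs_inner_starProjection_pow_le {ι κ : Type*} [Fintype ι] [DecidableEq ι]
    [Fintype κ] (b : OrthonormalBasis ι ℝ K) {A B : E →L[ℝ] E}
    (hB : ∀ j k, 0 ≤ ⟪(b j : E), B (b k)⟫_ℝ)
    (hBA : ∀ j k, ⟪(b j : E), B (b k)⟫_ℝ ≤ ⟪(b j : E), A (b k)⟫_ℝ) {n : ℕ} (hn : n ≠ 0) {C : ℝ}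
    (hA : ∀ (N : ℕ) (ξ η : Fin N → E), Orthonormal ℝ ξ → Orthonormal ℝ η →
      ∑ i, |⟪A (ξ i), η i⟫_ℝ| ^ (2 * n) ≤ C)
    {e f : κ → E} (he : Orthonormal ℝ e) (hf : Orthonormal ℝ f) :
    ∑ i, |⟪B (K.starProjection (e i)), K.starProjection (f i)⟫_ℝ| ^ (2 * n) ≤ C := by
  have hentry : ∀ (T : E →L[ℝ] E) j k,
      ⟪b j, K.compression T (b k)⟫_ℝ = ⟪(b j : E), T (b k)⟫_ℝ := fun T j k => by
    rw [real_inner_comm, inner_compression_apply, real_inner_comm]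
  calc ∑ i, |⟪B (K.starProjection (e i)), K.starProjection (f i)⟫_ℝ| ^ (2 * n)
      = ∑ i, |⟪K.compression B (K.orthogonalProjectionOnto (e i)),
          K.orthogonalProjectionOnto (f i)⟫_ℝ| ^ (2 * n) := by
        simp only [inner_compression_apply, starProjection_apply]
    _ ≤ trace ℝ K ((adjoint (K.compression B) ∘ₗ K.compression B) ^ n) :=
        (K.compression B).sum_abs_inner_pow_le_trace hn
          (sum_inner_orthogonalProjectionOnto_sq_le he)
          fun i => (K.norm_orthogonalProjectionOnto_apply_le _).trans (hf.1 i).le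
    _ ≤ trace ℝ K ((adjoint (K.compression A) ∘ₗ K.compression A) ^ n) :=
        LinearMap.trace_adjoint_comp_self_pow_le b (by simpa [hentry]) (by simpa [hentry]) n
    _ ≤ C := (K.compression A).trace_le_of_forall_orthonormal hn fun N ξ η hξ hη => by
        simpa only [inner_compression_apply, Function.comp_apply, coe_subtypeₗᵢ, coe_subtype]
          using hA N (K.subtypeₗᵢ ∘ ξ) (K.subtypeₗᵢ ∘ η)
            (K.subtypeₗᵢ.orthonormal_comp_iff.2 hξ) (K.subtypeₗᵢ.orthonormal_comp_iff.2 hη)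

end

end Submodule

end InnerProductSpace

namespace MeasureTheory

variable {α : Type*} [MeasurableSpace α] {μ : Measure α}

theorem L2.inner_nonneg_of_nonneg {f g : Lp ℝ 2 μ} (hf : 0 ≤ f) (hg : 0 ≤ g) :
    0 ≤ ⟪f, g⟫_ℝ := by
  rw [L2.inner_def]
  refine integral_nonneg_of_ae ?_
  filter_upwards [(Lp.coeFn_nonneg f).2 hf, (Lp.coeFn_nonneg g).2 hg] with a hfa hga
  simpa using mul_nonneg hga hfa

theorem smul_indicatorConstLp_one_nonneg {s : Set α} (hs : MeasurableSet s) (hμs : μ s ≠ ∞)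
    {c : ℝ} (hc : 0 ≤ c) : 0 ≤ c • indicatorConstLp 2 hs hμs (1 : ℝ) := by
  rw [← Lp.coeFn_nonneg]
  filter_upwards [Lp.coeFn_smul c (indicatorConstLp 2 hs hμs (1 : ℝ)),
    indicatorConstLp_coeFn (p := 2) (hs := hs) (hμs := hμs) (c := (1 : ℝ))] with a h1 h2
  rw [h1, Pi.smul_apply, h2]
  exact smul_nonneg hc (Set.indicator_nonneg (fun _ _ => zero_le_one) a)

theorem orthonormal_smul_indicatorConstLp {ι : Type*} {S : ι → Set α}
    (hS : ∀ i, MeasurableSet (S i)) (hfin : ∀ i, μ (S i) ≠ ∞) (hpos : ∀ i, μ (S i) ≠ 0)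
    (hdisj : Pairwise fun i j => Disjoint (S i) (S j)) :
    Orthonormal ℝ fun i => (√(μ.real (S i)))⁻¹ • indicatorConstLp 2 (hS i) (hfin i) (1 : ℝ) := by
  classical
  rw [orthonormal_iff_ite]
  intro i j
  simp only [real_inner_smul_left, real_inner_smul_right,
    L2.inner_indicatorConstLp_one_indicatorConstLp_one]
  split_ifs with h
  · have hμ : 0 < μ.real (S j) := ENNReal.toReal_pos (hpos j) (hfin j)
    rw [h, Set.inter_self, ← mul_assoc, ← mul_inv, RCLike.ofReal_real_eq_id, id,
      Real.mul_self_sqrt hμ.le, inv_mul_cancel₀ hμ.ne']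
  · simp [(hdisj h).inter_eq]

theorem SimpleFunc.ae_measure_preimage_singleton_ne_zero {β : Type*} (F : SimpleFunc α β) :
    ∀ᵐ a ∂μ, μ (F ⁻¹' {F a}) ≠ 0 := by
  classical
  rw [ae_iff]
  push Not
  refine measure_mono_null (t := ⋃ c ∈ F.range.filter fun c => μ (F ⁻¹' {c}) = 0, F ⁻¹' {c})
    (fun a ha => Set.mem_biUnion (by simpa using ha) rfl) ?_
  exact (measure_biUnion_null_iff (Finset.countable_toSet _)).2 fun c hc => by
    simpa using (mem_filter.1 hc).2

open Classical in
theorem SimpleFunc.ae_sum_indicator_fiber_eq {β : Type*} [Zero β] (F : SimpleFunc α β)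
    {g : β → ℝ} (hg : g 0 = 0) :
    ∀ᵐ a ∂μ, ∑ c ∈ F.range with c ≠ 0 ∧ μ (F ⁻¹' {c}) ≠ 0,
      g c * (F ⁻¹' {c}).indicator 1 a = g (F a) := by
  filter_upwards [F.ae_measure_preimage_singleton_ne_zero] with a hnull
  simp only [Set.indicator_apply, Set.mem_preimage, Set.mem_singleton_iff, Pi.one_apply,
    mul_ite, mul_one, mul_zero]
  rw [sum_ite_eq]
  split_ifs with ha
  · rfl
  · have : F a = 0 := by
      by_contra hne
      exact ha (mem_filter.2 ⟨F.mem_range_self a, hne, hnull⟩)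
    rw [this, hg]

theorem SimpleFunc.exists_orthonormalBasis_nonneg {β : Type*} [NormedAddCommGroup β]
    (F : SimpleFunc α β) (hF : MemLp F 2 μ) :
    ∃ (K : Submodule ℝ (Lp ℝ 2 μ)) (_ : FiniteDimensional ℝ K) (m : ℕ)
      (b : OrthonormalBasis (Fin m) ℝ K), (∀ k, 0 ≤ (b k : Lp ℝ 2 μ)) ∧
      ∀ g : β → ℝ, g 0 = 0 → ∃ h ∈ K, h =ᵐ[μ] g ∘ F := by
  classical
  let J := F.range.filter fun c => c ≠ 0 ∧ μ (F ⁻¹' {c}) ≠ 0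
  have hJ : ∀ c : J, (c : β) ≠ 0 ∧ μ (F ⁻¹' {(c : β)}) ≠ 0 := fun c => (mem_filter.1 c.2).2
  have hfin : ∀ c : J, μ (F ⁻¹' {(c : β)}) ≠ ∞ := fun c =>
    (F.measure_preimage_lt_top_of_memLp two_ne_zero ofNat_ne_top hF c (hJ c).1).ne
  let ind : J → Lp ℝ 2 μ := fun c => indicatorConstLp 2 (F.measurableSet_fiber c) (hfin c) 1
  let χ : J → Lp ℝ 2 μ := fun c => (√(μ.real (F ⁻¹' {(c : β)})))⁻¹ • ind c
  have hχ : Orthonormal ℝ χ := orthonormal_smul_indicatorConstLp _ hfin (fun c => (hJ c).2)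
    fun c c' h => (Set.disjoint_singleton.2 fun h' => h (Subtype.ext h')).preimage F
  obtain ⟨m, b, hb⟩ := hχ.exists_orthonormalBasis_span
  refine ⟨_, FiniteDimensional.span_of_finite ℝ (Set.finite_range χ), m, b, fun k => ?_,
    fun g hg => ⟨∑ c : J, g c • ind c, sum_mem fun c _ => smul_mem _ _ ?_, ?_⟩⟩
  · obtain ⟨c, hc⟩ := hb k
    exact hc ▸ smul_indicatorConstLp_one_nonneg _ _ (inv_nonneg.2 (Real.sqrt_nonneg _))
  · have hμ : 0 < √(μ.real (F ⁻¹' {(c : β)})) :=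
      Real.sqrt_pos.2 (ENNReal.toReal_pos (hJ c).2 (hfin c))
    have : ind c = √(μ.real (F ⁻¹' {(c : β)})) • χ c := by
      simp [χ, smul_smul, mul_inv_cancel₀ hμ.ne']
    exact this ▸ smul_mem _ _ (subset_span (Set.mem_range_self c))
  filter_upwards [Lp.coeFn_finsetSum univ (fun c : J => g c • ind c),
    ae_all_iff.2 fun c : J => Lp.coeFn_smul (g c) (ind c),
    ae_all_iff.2 fun c : J => indicatorConstLp_coeFn (p := 2) (hs := F.measurableSet_fiber c)
      (hμs := hfin c) (c := (1 : ℝ)),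
    F.ae_sum_indicator_fiber_eq hg] with a hsum hsmul hind hrep
  rw [hsum, Finset.sum_apply, Function.comp_apply, ← hrep]
  simp only [hsmul, Pi.smul_apply, ind, hind, smul_eq_mul]
  exact sum_coe_sort J fun c => g c * (F ⁻¹' {c}).indicator 1 a

theorem Lp.exists_orthonormalBasis_nonneg_approx {κ : Type*} [Fintype κ] (v : κ → Lp ℝ 2 μ)
    {ε : ℝ} (hε : 0 < ε) :
    ∃ (K : Submodule ℝ (Lp ℝ 2 μ)) (_ : FiniteDimensional ℝ K) (m : ℕ)
      (b : OrthonormalBasis (Fin m) ℝ K), (∀ k, 0 ≤ (b k : Lp ℝ 2 μ)) ∧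
      ∀ i, ∃ g ∈ K, ‖v i - g‖ < ε := by
  -- one simple function with values in `κ → ℝ` approximates all the `v i`, so they share its fibres
  obtain ⟨F, hFv, hF⟩ := (MemLp.of_eval fun i => Lp.memLp (v i)).exists_simpleFunc_eLpNorm_sub_lt
    ofNat_ne_top (ofReal_pos.2 hε).ne'
  obtain ⟨K, hK, m, b, hb, hrep⟩ := F.exists_orthonormalBasis_nonneg hF
  refine ⟨K, hK, m, b, hb, fun i => ?_⟩
  obtain ⟨g, hgK, hg⟩ := hrep (· i) rfl
  refine ⟨g, hgK, ?_⟩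
  rw [← _root_.dist_eq_norm, dist_def]
  refine toReal_lt_of_lt_ofReal (lt_of_le_of_lt ?_ hFv)
  have hdiff : ⇑(v i) - ⇑g =ᵐ[μ] fun a => v i a - F a i := hg.mono fun a ha => by simp [ha]
  refine (eLpNorm_congr_ae hdiff).trans_le (eLpNorm_mono fun a => ?_)
  exact norm_le_pi_norm (((fun a j => v j a) - ⇑F) a) i

theorem Lp.sum_abs_inner_pow_le_of_nonneg_le {A B : Lp ℝ 2 μ →L[ℝ] Lp ℝ 2 μ}
    (hB : ∀ f : Lp ℝ 2 μ, 0 ≤ f → 0 ≤ B f) (hAB : ∀ f : Lp ℝ 2 μ, 0 ≤ f → 0 ≤ (A - B) f)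
    {n : ℕ} (hn : n ≠ 0) {C : ℝ}
    (hA : ∀ (N : ℕ) (ξ η : Fin N → Lp ℝ 2 μ), Orthonormal ℝ ξ → Orthonormal ℝ η →
      ∑ i, |⟪A (ξ i), η i⟫_ℝ| ^ (2 * n) ≤ C)
    {N : ℕ} {e f : Fin N → Lp ℝ 2 μ} (he : Orthonormal ℝ e) (hf : Orthonormal ℝ f) :
    ∑ i, |⟪B (e i), f i⟫_ℝ| ^ (2 * n) ≤ C := by
  have hcont : Continuous fun p : (Fin N → Lp ℝ 2 μ) × (Fin N → Lp ℝ 2 μ) =>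
      ∑ i, |⟪B (p.1 i), p.2 i⟫_ℝ| ^ (2 * n) := by
    fun_prop
  refine le_of_forall_dist_lt_le hcont (x := (e, f)) fun ε hε => ?_
  obtain ⟨K, _, m, b, hb, happrox⟩ := exists_orthonormalBasis_nonneg_approx (Sum.elim e f) hε
  have hproj : ∀ i, ‖Sum.elim e f i - K.starProjection (Sum.elim e f i)‖ < ε := fun i =>
    (happrox i).elim fun _ ⟨hg, h⟩ => norm_sub_starProjection_lt hg h
  refine ⟨(fun i => K.starProjection (e i), fun i => K.starProjection (f i)), ?_, ?_⟩
  · rw [Prod.dist_eq, max_lt_iff, dist_pi_lt_iff hε, dist_pi_lt_iff hε]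
    exact ⟨fun i => by simpa [_root_.dist_eq_norm] using hproj (.inl i),
      fun i => by simpa [_root_.dist_eq_norm] using hproj (.inr i)⟩
  refine K.sum_abs_inner_starProjection_pow_le b
    (fun j k => L2.inner_nonneg_of_nonneg (hb j) (hB _ (hb k))) (fun j k => ?_) hn hA he hf
  simpa [inner_sub_right] using L2.inner_nonneg_of_nonneg (hb j) (hAB _ (hb k))

end MeasureTheory

theorem schattenNorm_le_of_nonneg_le {α : Type*} [MeasurableSpace α] {μ : Measure α} {n : ℕ}
    (hn : n ≠ 0) {A B : Lp ℝ 2 μ →L[ℝ] Lp ℝ 2 μ}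
    (hB : ∀ f : Lp ℝ 2 μ, 0 ≤ f → 0 ≤ B f) (hAB : ∀ f : Lp ℝ 2 μ, 0 ≤ f → 0 ≤ (A - B) f) :
    schattenNorm ℝ (2 * (n : ℝ)) B ≤ schattenNorm ℝ (2 * (n : ℝ)) A := by
  have hpow : ∀ x : ℝ, (‖x‖₊ : ℝ≥0∞) ^ (2 * (n : ℝ)) = ENNReal.ofReal (|x| ^ (2 * n)) := by
    intro x
    rw [← Nat.cast_ofNat, ← Nat.cast_mul, rpow_natCast, ofReal_pow (abs_nonneg x),
      ← Real.enorm_eq_ofReal_abs]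
    rfl
  refine rpow_le_rpow ?_ (by positivity)
  simp only [hpow]
  set SA := ⨆ (N : ℕ) (e : Fin N → Lp ℝ 2 μ) (f : Fin N → Lp ℝ 2 μ) (_ : Orthonormal ℝ e)
    (_ : Orthonormal ℝ f), ∑ i, ENNReal.ofReal (|⟪A (e i), f i⟫_ℝ| ^ (2 * n))
  rcases eq_or_ne SA ⊤ with hSA | hSA
  · rw [hSA]
    exact le_top
  have hsum : ∀ {N} (e f : Fin N → Lp ℝ 2 μ) (T : Lp ℝ 2 μ →L[ℝ] Lp ℝ 2 μ),
      ∑ i, ENNReal.ofReal (|⟪T (e i), f i⟫_ℝ| ^ (2 * n)) =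
        ENNReal.ofReal (∑ i, |⟪T (e i), f i⟫_ℝ| ^ (2 * n)) := fun e f T =>
    (ofReal_sum_of_nonneg fun _ _ => by positivity).symm
  refine iSup_le fun N => iSup_le fun e => iSup_le fun f => iSup_le fun he => iSup_le fun hf => ?_
  rw [hsum, ofReal_le_iff_le_toReal hSA]
  refine Lp.sum_abs_inner_pow_le_of_nonneg_le hB hAB hn (fun N ξ η hξ hη => ?_) he hf
  rw [← ofReal_le_iff_le_toReal hSA, ← hsum]
  exact le_iSup_of_le N (le_iSup_of_le ξ (le_iSup_of_le η (le_iSup_of_le hξ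
    (le_iSup_of_le hη le_rfl))))

theorem stmt_7_general {α : Type*} [MeasurableSpace α] {μ : Measure α}
    (n : ℕ) (hn : 1 ≤ n)
    (A B : Lp ℝ 2 μ →L[ℝ] Lp ℝ 2 μ)
    (hB : ∀ f : Lp ℝ 2 μ, 0 ≤ f → 0 ≤ B f)
    (hAB : ∀ f : Lp ℝ 2 μ, 0 ≤ f → 0 ≤ (A - B) f)
    (hA : schattenNorm ℝ (2 * (n : ℝ)) A ≠ ⊤) :
    schattenNorm ℝ (2 * (n : ℝ)) B ≠ ⊤ ∧
      schattenNorm ℝ (2 * (n : ℝ)) B ≤ schattenNorm ℝ (2 * (n : ℝ)) A := by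
  have hle := schattenNorm_le_of_nonneg_le (Nat.one_le_iff_ne_zero.1 hn) hB hAB
  exact ⟨ne_top_of_le_ne_top hA hle, hle⟩

/-- If `0 ≼ B ≼ A` in the positivity preserving ordering and `A ∈ 𝓑_{2n}(L²(M; dμ))`,
then `B ∈ 𝓑_{2n}(L²(M; dμ))` and `‖B‖_{𝓑_{2n}} ≤ ‖A‖_{𝓑_{2n}}`. -/
theorem stmt_7 {α : Type*} [MeasurableSpace α] {μ : Measure α} [SigmaFinite μ]
    (n : ℕ) (hn : 1 ≤ n)
    (A B : Lp ℝ 2 μ →L[ℝ] Lp ℝ 2 μ)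
    (hB : ∀ f : Lp ℝ 2 μ, 0 ≤ f → 0 ≤ B f)
    (hAB : ∀ f : Lp ℝ 2 μ, 0 ≤ f → 0 ≤ (A - B) f)
    (hA : schattenNorm ℝ (2 * (n : ℝ)) A ≠ ⊤) :
    schattenNorm ℝ (2 * (n : ℝ)) B ≠ ⊤ ∧
      schattenNorm ℝ (2 * (n : ℝ)) B ≤ schattenNorm ℝ (2 * (n : ℝ)) A :=
  stmt_7_general n hn A B hB hAB hA
end

section
/- Let 𝓥 be a reflexive Banach space, 𝓦 a Banach space, K : 𝓥 → 𝓥* a compact linear operator, and T : 𝓥 → 𝓦 a bounded injective linear operator. Then for every ε > 0 there exists C_ε > 0 such that |⟨u, K u⟩_{𝓥,𝓥*}| ≤ ε ‖u‖_𝓥² + C_ε ‖T u‖_𝓦² for all u ∈ 𝓥. -/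
/-!
If the estimate failed for some `ε`, there would be unit vectors `vₙ` with `‖T vₙ‖ → 0` and
`|⟨K vₙ, vₙ⟩| > ε`. Along an ultrafilter, `K vₙ` converges in norm to some `w` (compactness of `K`)
and `vₙ` converges weakly to some `u` (Banach–Alaoglu in the bidual, which reflexivity pulls back
to `V`). Weak continuity of `T` gives `T u = 0`, hence `u = 0`, and then
`⟨K vₙ, vₙ⟩ → w u = 0`, a contradiction.
-/

open Filter Topology Metric NormedSpace

theorem IsCompact.exists_tendsto_ultrafilter {X ι : Type*} [TopologicalSpace X] {s : Set X}
    (hs : IsCompact s) (𝒰 : Ultrafilter ι) {f : ι → X} (hf : ∀ i, f i ∈ s) :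
    ∃ x, Tendsto f 𝒰 (𝓝 x) := by
  obtain ⟨x, -, hx⟩ :=
    hs.ultrafilter_le_nhds' (𝒰.map f) (Ultrafilter.mem_map.mpr (Eventually.of_forall hf))
  exact ⟨x, hx⟩

theorem tendsto_zero_of_forall_mul_norm_sq_le {E : Type*} [SeminormedAddCommGroup E]
    {x : ℕ → E} {M : ℝ} (hx : ∀ n, (n + 1) * ‖x n‖ ^ 2 ≤ M) : Tendsto x atTop (𝓝 0) := by
  have hsq : Tendsto (fun n ↦ ‖x n‖ ^ 2) atTop (𝓝 0) := by
    refine squeeze_zero (fun n ↦ sq_nonneg _) (fun n ↦ ?_)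
      ((tendsto_const_div_atTop_nhds_zero_nat M).comp (tendsto_add_atTop_nat 1))
    rw [Function.comp_apply, Nat.cast_add_one, le_div_iff₀ (by positivity), mul_comm]
    exact hx n
  rw [tendsto_zero_iff_norm_tendsto_zero]
  simpa [Function.comp_def, Real.sqrt_sq_eq_abs] using (Real.continuous_sqrt.tendsto 0).comp hsq

theorem tendsto_apply_of_tendsto_of_tendsto_toWeakSpace {𝕜 E ι : Type*}
    [NontriviallyNormedField 𝕜] [SeminormedAddCommGroup E] [NormedSpace 𝕜 E] {l : Filter ι}
    {f : ι → StrongDual 𝕜 E} {g : StrongDual 𝕜 E} {v : ι → E} {u : E} {R : ℝ}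
    (hf : Tendsto f l (𝓝 g))
    (hu : Tendsto (fun i ↦ toWeakSpace 𝕜 E (v i)) l (𝓝 (toWeakSpace 𝕜 E u)))
    (hR : ∀ i, ‖v i‖ ≤ R) : Tendsto (fun i ↦ f i (v i)) l (𝓝 (g u)) := by
  have hsmall : Tendsto (fun i ↦ (f i - g) (v i)) l (𝓝 0) := by
    refine squeeze_zero_norm (fun i ↦ ((f i - g).le_opNorm (v i)).trans ?_)
      (by simpa using ((tendsto_iff_norm_sub_tendsto_zero.mp hf).mul_const R))
    exact mul_le_mul_of_nonneg_left (hR i) (norm_nonneg _)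
  have hweak : Tendsto (fun i ↦ g (v i)) l (𝓝 (g u)) :=
    ((WeakBilin.eval_continuous _ g).tendsto _).comp hu
  simpa using hsmall.add hweak

section WeakTopology

variable {𝕜 E F ι : Type*} [RCLike 𝕜] [NormedAddCommGroup E] [NormedSpace 𝕜 E]
  [NormedAddCommGroup F] [NormedSpace 𝕜 F] {l : Filter ι}

theorem isCompact_closure_image_toWeakSpace_of_surjective
    (hrefl : Function.Surjective (inclusionInDoubleDual 𝕜 E)) {s : Set E}
    (hs : Bornology.IsBounded s) : IsCompact (closure (toWeakSpace 𝕜 E '' s)) := by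
  refine isCompact_closure_of_isBounded 𝕜 E _
    (by rwa [Set.preimage_image_eq _ (toWeakSpace 𝕜 E).injective]) ?_
  rintro x -
  obtain ⟨y, hy⟩ := hrefl (WeakDual.toStrongDual x)
  exact ⟨toWeakSpace 𝕜 E y, congrArg StrongDual.toWeakDual hy⟩

theorem ContinuousLinearMap.eq_zero_of_tendsto_toWeakSpace [l.NeBot] (T : E →L[𝕜] F)
    {v : ι → E} {u : E}
    (hu : Tendsto (fun i ↦ toWeakSpace 𝕜 E (v i)) l (𝓝 (toWeakSpace 𝕜 E u)))
    (hTv : Tendsto (fun i ↦ T (v i)) l (𝓝 0)) : T u = 0 := by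
  have hweak : Tendsto (fun i ↦ toWeakSpace 𝕜 F (T (v i))) l (𝓝 (toWeakSpace 𝕜 F (T u))) :=
    ((WeakSpace.map T).continuous.tendsto _).comp hu
  have hnorm : Tendsto (fun i ↦ toWeakSpace 𝕜 F (T (v i))) l (𝓝 (toWeakSpace 𝕜 F 0)) :=
    ((toWeakSpaceCLM 𝕜 F).continuous.tendsto 0).comp hTv
  exact (toWeakSpace 𝕜 F).injective (tendsto_nhds_unique hweak hnorm)

theorem tendsto_apply_self_of_tendsto_zero
    (hrefl : Function.Surjective (inclusionInDoubleDual 𝕜 E))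
    {K : E →L[𝕜] StrongDual 𝕜 E} (hK : IsCompactOperator K) {T : E →L[𝕜] F}
    (hT : Function.Injective T) {v : ι → E} {R : ℝ} (hR : ∀ i, ‖v i‖ ≤ R)
    (hTv : Tendsto (fun i ↦ T (v i)) l (𝓝 0)) :
    Tendsto (fun i ↦ K (v i) (v i)) l (𝓝 0) := by
  -- Along an ultrafilter both compactness arguments yield genuine limits, with no subsequences.
  rw [tendsto_iff_ultrafilter]
  intro 𝒰 h𝒰
  have hball : ∀ i, v i ∈ closedBall (0 : E) R := by simpa using hR
  obtain ⟨w, hw⟩ := (hK.isCompact_closure_image_closedBall R).exists_tendsto_ultrafilter 𝒰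
    fun i ↦ subset_closure (Set.mem_image_of_mem K (hball i))
  obtain ⟨u', hu⟩ := (isCompact_closure_image_toWeakSpace_of_surjective hrefl
    isBounded_closedBall).exists_tendsto_ultrafilter 𝒰
    fun i ↦ subset_closure (Set.mem_image_of_mem (toWeakSpace 𝕜 E) (hball i))
  obtain ⟨u, rfl⟩ := (toWeakSpace 𝕜 E).surjective u'
  have hu0 : u = 0 :=
    hT (by simpa using T.eq_zero_of_tendsto_toWeakSpace hu (hTv.mono_left h𝒰))
  simpa [hu0] using tendsto_apply_of_tendsto_of_tendsto_toWeakSpace hw hu hR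

end WeakTopology

section

variable {V W : Type*} [NormedAddCommGroup V] [NormedSpace ℝ V] [NormedAddCommGroup W]
  [NormedSpace ℝ W]

theorem abs_apply_self_le_of_forall_norm_eq_one {K : V →L[ℝ] StrongDual ℝ V} {T : V →L[ℝ] W}
    {ε C : ℝ} (h : ∀ v, ‖v‖ = 1 → |K v v| ≤ ε + C * ‖T v‖ ^ 2) (u : V) :
    |K u u| ≤ ε * ‖u‖ ^ 2 + C * ‖T u‖ ^ 2 := by
  rcases eq_or_ne u 0 with rfl | hu
  · simp
  have hr : 0 < ‖u‖ := norm_pos_iff.mpr hu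
  have hunit := h (‖u‖⁻¹ • u) (norm_smul_inv_norm hu)
  simp only [map_smul, _root_.smul_apply, smul_eq_mul, abs_mul, norm_smul, norm_inv, norm_norm,
    abs_inv, abs_norm] at hunit
  calc |K u u| = ‖u‖ ^ 2 * (‖u‖⁻¹ * (‖u‖⁻¹ * |K u u|)) := by field_simp
    _ ≤ ‖u‖ ^ 2 * (ε + C * (‖u‖⁻¹ * ‖T u‖) ^ 2) := by gcongr
    _ = ε * ‖u‖ ^ 2 + C * ‖T u‖ ^ 2 := by field_simp

theorem exists_forall_norm_eq_one_abs_apply_self_le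
    (hrefl : Function.Surjective (inclusionInDoubleDual ℝ V))
    {K : V →L[ℝ] StrongDual ℝ V} (hK : IsCompactOperator K) {T : V →L[ℝ] W}
    (hT : Function.Injective T) {ε : ℝ} (hε : 0 < ε) :
    ∃ C > 0, ∀ v, ‖v‖ = 1 → |K v v| ≤ ε + C * ‖T v‖ ^ 2 := by
  by_contra! hcon
  choose v hv1 hv using fun n : ℕ ↦ hcon (n + 1) (by positivity)
  have hKv : ∀ n, |K (v n) (v n)| ≤ ‖K‖ := fun n ↦ by
    simpa [hv1 n] using K.le_opNorm₂ (v n) (v n)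
  have hTv : Tendsto (fun n ↦ T (v n)) atTop (𝓝 0) :=
    tendsto_zero_of_forall_mul_norm_sq_le (M := ‖K‖) fun n ↦ by linarith [hv n, hKv n]
  have hKvv := tendsto_apply_self_of_tendsto_zero hrefl hK hT (fun n ↦ (hv1 n).le) hTv
  obtain ⟨n, hn⟩ := (hKvv.abs.eventually (gt_mem_nhds (by simpa using hε))).exists
  have : 0 ≤ (n + 1 : ℝ) * ‖T (v n)‖ ^ 2 := by positivity
  linarith [hv n]

end

theorem stmt_15_general {V W : Type*} [NormedAddCommGroup V] [NormedSpace ℝ V]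
    [NormedAddCommGroup W] [NormedSpace ℝ W]
    (hrefl : Function.Surjective (NormedSpace.inclusionInDoubleDual ℝ V))
    (K : V →L[ℝ] StrongDual ℝ V) (hK : IsCompactOperator K)
    (T : V →L[ℝ] W) (hT : Function.Injective T) :
    ∀ ε > 0, ∃ C > 0, ∀ u : V, |K u u| ≤ ε * ‖u‖ ^ 2 + C * ‖T u‖ ^ 2 := by
  intro ε hε
  obtain ⟨C, hC, hunit⟩ := exists_forall_norm_eq_one_abs_apply_self_le hrefl hK hT hε
  exact ⟨C, hC, abs_apply_self_le_of_forall_norm_eq_one hunit⟩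

/-- If `𝓥` is a reflexive Banach space, `K : 𝓥 → 𝓥*` a compact operator, and
`T : 𝓥 → 𝓦` a bounded injective operator, then for every `ε > 0` there is `C_ε > 0`
with `|⟨u, K u⟩| ≤ ε ‖u‖² + C_ε ‖T u‖²` for all `u ∈ 𝓥`. -/
theorem stmt_15 {V W : Type*} [NormedAddCommGroup V] [NormedSpace ℝ V] [CompleteSpace V]
    [NormedAddCommGroup W] [NormedSpace ℝ W]
    (hrefl : Function.Surjective (NormedSpace.inclusionInDoubleDual ℝ V))
    (K : V →L[ℝ] StrongDual ℝ V) (hK : IsCompactOperator K)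
    (T : V →L[ℝ] W) (hT : Function.Injective T) :
    ∀ ε > 0, ∃ C > 0, ∀ u : V, |K u u| ≤ ε * ‖u‖ ^ 2 + C * ‖T u‖ ^ 2 :=
  stmt_15_general hrefl K hK T hT
end
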